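/- arXiv:1002.2028 — 4 statements merged into one kernel-verified Lean document; each statement's English description precedes it below -/
import Mathlib

section
/- Let $\Psi = (\psi_1,\ldots,\psi_t)$ be linear forms $\mathbb{Z}^D \to \mathbb{Z}$. For each $i \geq 1$ let $\Psi^{[i]}$ denote the linear subspace of $\mathbb{R}^t$ spanned by the vectors $(\psi_1(\mathbf{n})^j,\ldots,\psi_t(\mathbf{n})^j)$ for $1 \leq j \leq i$ and $\mathbf{n} \in \mathbb{Z}^D$. Then $\Psi^{[i]}$ equals the span of all coordinatewise products $\Psi(\mathbf{n}_1)\cdots\Psi(\mathbf{n}_j)$ with $1 \leq j \leq i$ and $\mathbf{n}_1,\ldots,\mathbf{n}_j \in \mathbb{Z}^D$. -/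
/-! The product `Ψ(n₁)⋯Ψ(n_j)` is recovered from `j`-th powers by the polarization identity
`j! x₁⋯x_j = ∑_{S ⊆ [j]} (-1)^{j-|S|} (∑_{a ∈ S} x_a)^j`, valid in any commutative ring, here
`ℝ^t`. Since `Ψ` is additive, `∑_{a ∈ S} Ψ(n_a) = Ψ(∑_{a ∈ S} n_a)`, so every term on the right
is a multiple of a power vector `Ψ(m)^j`. To prove the identity, expand each power into a sum
over maps `g : [j] → [j]`; by inclusion–exclusion only the surjective `g`, i.e. the
permutations, survive. -/

open Finset

/-- `Ψ^{[i]}`: the span of the coordinatewise powers `(ψ₁(n)^j, …, ψ_t(n)^j)` for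
`1 ≤ j ≤ i` and `n ∈ ℤ^D`. -/
def powerSpan (D t : ℕ) (ψ : Fin t → ((Fin D → ℤ) →+ ℤ)) (i : ℕ) :
    Submodule ℝ (Fin t → ℝ) :=
  Submodule.span ℝ
    {v : Fin t → ℝ | ∃ j, 1 ≤ j ∧ j ≤ i ∧ ∃ n : Fin D → ℤ,
      v = fun k => ((ψ k n : ℤ) : ℝ) ^ j}

theorem sum_neg_one_pow_card_compl_of_subset {ι : Type*} [Fintype ι] [DecidableEq ι]
    (T : Finset ι) :
    ∑ S : Finset ι, (if T ⊆ S then (-1 : ℤ) ^ #Sᶜ else 0) = if T = univ then 1 else 0 := by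
  simp_rw [← sum_filter, ← compl_eq_empty_iff, ← sum_powerset_neg_one_pow_card]
  refine sum_nbij' compl compl (fun S hS => ?_) (fun U hU => ?_) (fun S _ => compl_compl S)
    (fun U _ => compl_compl U) (fun _ _ => rfl)
  · simpa using (mem_filter.mp hS).2
  · simpa [subset_compl_comm] using hU

open Function Nat

theorem sum_bijective_prod_comp {R ι : Type*} [CommSemiring R] [Fintype ι] [DecidableEq ι]
    (x : ι → R) :
    ∑ g : ι → ι with Bijective g, ∏ m, x (g m) = (Fintype.card ι)! • ∏ a, x a := by
  rw [sum_subtype (p := Bijective) _ (fun g => by simp), ← Fintype.card_perm, ← Finset.card_univ,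
    ← sum_const]
  exact Fintype.sum_equiv Equiv.bijectiveEquiv _ _ fun g =>
    Equiv.prod_comp (Equiv.bijectiveEquiv g) x

theorem sum_neg_one_pow_smul_sum_pow {R : Type*} [CommRing R] {n : ℕ} (x : Fin n → R) :
    ∑ S : Finset (Fin n), (-1 : ℤ) ^ #Sᶜ • (∑ a ∈ S, x a) ^ n = n ! • ∏ a, x a := by
  have expand (S : Finset (Fin n)) : (∑ a ∈ S, x a) ^ n =
      ∑ g : Fin n → Fin n, if image g univ ⊆ S then ∏ m, x (g m) else 0 := by
    rw [sum_pow', ← sum_filter]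
    congr 1
    ext g
    simp [Fintype.mem_piFinset, image_subset_iff]
  calc _ = ∑ g : Fin n → Fin n,
        (∑ S, if image g univ ⊆ S then (-1 : ℤ) ^ #Sᶜ else 0) • ∏ m, x (g m) := by
        simp_rw [expand, smul_sum, sum_smul, ite_smul, zero_smul, smul_ite, smul_zero]
        exact sum_comm
    _ = ∑ g : Fin n → Fin n with Bijective g, ∏ m, x (g m) := by
        simp_rw [sum_neg_one_pow_card_compl_of_subset, ite_smul, one_smul, zero_smul, sum_filter]
        refine sum_congr rfl fun g _ => if_congr ?_ rfl rfl
        rw [← Finite.surjective_iff_bijective, ← coe_eq_univ, coe_image, coe_univ, Set.image_univ,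
          Set.range_eq_univ]
    _ = n ! • ∏ a, x a := by rw [sum_bijective_prod_comp, Fintype.card_fin]

theorem prod_mem_powerSpan {D t i j : ℕ} (ψ : Fin t → ((Fin D → ℤ) →+ ℤ)) (hj : 1 ≤ j)
    (hji : j ≤ i) (n : Fin j → (Fin D → ℤ)) :
    ∏ a : Fin j, (fun k : Fin t => ((ψ k (n a) : ℤ) : ℝ)) ∈ powerSpan D t ψ i := by
  have pow_mem (m : Fin D → ℤ) : (fun k : Fin t => ((ψ k m : ℤ) : ℝ)) ^ j ∈ powerSpan D t ψ i :=
    Submodule.subset_span ⟨j, hj, hji, m, by funext k; simp⟩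
  have sum_eq (S : Finset (Fin j)) : ∑ a ∈ S, (fun k : Fin t => ((ψ k (n a) : ℤ) : ℝ)) =
      fun k => ((ψ k (∑ a ∈ S, n a) : ℤ) : ℝ) := by
    funext k
    simp [map_sum]
  have factorial_smul_mem : j ! • ∏ a : Fin j, (fun k : Fin t => ((ψ k (n a) : ℤ) : ℝ)) ∈
      powerSpan D t ψ i := by
    rw [← sum_neg_one_pow_smul_sum_pow]
    exact Submodule.sum_mem _ fun S _ => zsmul_mem (sum_eq S ▸ pow_mem _) _
  rwa [← Nat.cast_smul_eq_nsmul ℝ, Submodule.smul_mem_iff _ (by positivity)] at factorial_smul_mem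

theorem powerSpan_eq_productSpan_general (D t : ℕ) (ψ : Fin t → ((Fin D → ℤ) →+ ℤ)) (i : ℕ) :
    powerSpan D t ψ i =
      Submodule.span ℝ
        {v : Fin t → ℝ | ∃ j, 1 ≤ j ∧ j ≤ i ∧ ∃ n : Fin j → (Fin D → ℤ),
          v = ∏ a : Fin j, fun k : Fin t => ((ψ k (n a) : ℤ) : ℝ)} := by
  refine le_antisymm (Submodule.span_mono ?_) (Submodule.span_le.mpr ?_)
  · rintro v ⟨j, hj, hji, m, rfl⟩
    exact ⟨j, hj, hji, fun _ => m, by funext k; simp⟩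
  · rintro v ⟨j, hj, hji, n, rfl⟩
    exact prod_mem_powerSpan ψ hj hji n

/-- `Ψ^{[i]}` equals the span of all coordinatewise products `Ψ(n₁)⋯Ψ(n_j)` with
`1 ≤ j ≤ i` and `n₁,…,n_j ∈ ℤ^D`. -/
theorem powerSpan_eq_productSpan (D t : ℕ) (ψ : Fin t → ((Fin D → ℤ) →+ ℤ)) (i : ℕ)
    (hi : 1 ≤ i) :
    powerSpan D t ψ i =
      Submodule.span ℝ
        {v : Fin t → ℝ | ∃ j, 1 ≤ j ∧ j ≤ i ∧ ∃ n : Fin j → (Fin D → ℤ),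
          v = ∏ a : Fin j, fun k : Fin t => ((ψ k (n a) : ℤ) : ℝ)} :=
  powerSpan_eq_productSpan_general D t ψ i
end

section
/- Let $\Psi = (\psi_1,\ldots,\psi_t)$ be linear forms $\mathbb{Z}^D \to \mathbb{Z}$ and for $i \geq 1$ let $\Psi^{[i]} \subseteq \mathbb{R}^t$ be the span of the vectors $(\psi_1(\mathbf{n})^j,\ldots,\psi_t(\mathbf{n})^j)$ for $1 \leq j \leq i$, $\mathbf{n} \in \mathbb{Z}^D$ (with $\Psi^{[0]} := \{0\}$). Then for all $i, j \geq 0$ the coordinatewise product satisfies $\Psi^{[i]} \cdot \Psi^{[j]} \subseteq \Psi^{[i+j]}$, i.e. for every $u \in \Psi^{[i]}$ and $v \in \Psi^{[j]}$ the coordinatewise product $u \cdot v$ lies in $\Psi^{[i+j]}$. -/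
open Finset

/-
Writing `d = a + b`, the binomial theorem gives
`(x + r y)^d = ∑ₛ rˢ (d choose s) x^(d-s) yˢ`, and the Vandermonde matrix `(rˢ)` for
`r = 0, …, d` is invertible, so every monomial `x^a y^b` is a linear combination of the
powers `(x + r y)^d`.  Applied coordinatewise to `x = Ψ(n)` and `y = Ψ(m)`, these powers are
`Ψ(n + r m)^d`, so the product of two generators of `Ψ^{[i]}` and `Ψ^{[j]}` lies in
`Ψ^{[i+j]}`, and bilinearity does the rest.
-/

theorem Matrix.span_row_vandermonde_eq_top {K : Type*} [Field K] {n : ℕ} {v : Fin n → K}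
    (hv : Function.Injective v) :
    Submodule.span K (Set.range (Matrix.vandermonde v).row) = ⊤ := by
  rw [← range_vecMulLinear, LinearMap.range_eq_top, Matrix.coe_vecMulLinear,
    Matrix.vecMul_surjective_iff_isUnit, Matrix.isUnit_iff_isUnit_det, isUnit_iff_ne_zero,
    Matrix.det_vandermonde_ne_zero_iff]
  exact hv

theorem pow_mul_pow_mem_span_add_smul_pow {K A : Type*} [Field K] [CharZero K] [CommRing A]
    [Algebra K A] (x y : A) (a b : ℕ) :
    x ^ a * y ^ b ∈ Submodule.span K (Set.range fun r : ℕ => (x + (r : K) • y) ^ (a + b)) := by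
  set d := a + b
  let L := Fintype.linearCombination K fun s : Fin (d + 1) =>
    (d.choose s : K) • (y ^ (s : ℕ) * x ^ (d - s))
  have hrow (r : Fin (d + 1)) :
      L ((Matrix.vandermonde fun r : Fin (d + 1) => ((r : ℕ) : K)).row r)
        = (x + ((r : ℕ) : K) • y) ^ d := by
    rw [add_comm x, add_pow, ← Fin.sum_univ_eq_sum_range, Fintype.linearCombination_apply]
    refine Finset.sum_congr rfl fun s _ => ?_
    simp only [Matrix.row, Matrix.vandermonde_apply, Algebra.smul_def, map_pow, map_natCast]
    ring
  have hb : b < d + 1 := by omega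
  have hsingle : L (Pi.single ⟨b, hb⟩ 1)
      ∈ Submodule.span K (Set.range fun r : ℕ => (x + (r : K) • y) ^ d) := by
    have hmap : Submodule.map L ⊤
        ≤ Submodule.span K (Set.range fun r : ℕ => (x + (r : K) • y) ^ d) := by
      rw [← Matrix.span_row_vandermonde_eq_top (Nat.cast_injective.comp Fin.val_injective),
        Submodule.map_span, Submodule.span_le]
      rintro _ ⟨_, ⟨r, rfl⟩, rfl⟩
      exact Submodule.subset_span ⟨r, (hrow r).symm⟩
    exact hmap ⟨_, Submodule.mem_top, rfl⟩
  rw [Fintype.linearCombination_apply_single, one_smul, Nat.add_sub_cancel] at hsingle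
  have hchoose : (d.choose b : K) ≠ 0 := Nat.cast_ne_zero.2 (Nat.choose_pos (by omega)).ne'
  simpa [mul_comm, smul_smul, hchoose] using Submodule.smul_mem _ (d.choose b : K)⁻¹ hsingle

theorem pow_mem_powerSpan {D t : ℕ} (ψ : Fin t → ((Fin D → ℤ) →+ ℤ)) {i j : ℕ} (hj : 1 ≤ j)
    (hji : j ≤ i) (n : Fin D → ℤ) : (fun k => ((ψ k n : ℤ) : ℝ)) ^ j ∈ powerSpan D t ψ i :=
  Submodule.subset_span ⟨j, hj, hji, n, rfl⟩

theorem pow_mul_pow_mem_powerSpan {D t : ℕ} (ψ : Fin t → ((Fin D → ℤ) →+ ℤ)) {a b i j : ℕ}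
    (ha : 1 ≤ a) (hai : a ≤ i) (hbj : b ≤ j) (n m : Fin D → ℤ) :
    (fun k => ((ψ k n : ℤ) : ℝ)) ^ a * (fun k => ((ψ k m : ℤ) : ℝ)) ^ b
      ∈ powerSpan D t ψ (i + j) := by
  refine Submodule.span_le.2 ?_ (pow_mul_pow_mem_span_add_smul_pow (K := ℝ) _ _ a b)
  rintro _ ⟨r, rfl⟩
  have hlin : ((fun k => ((ψ k n : ℤ) : ℝ)) + (r : ℝ) • fun k => ((ψ k m : ℤ) : ℝ))
      = fun k => ((ψ k (n + r • m) : ℤ) : ℝ) := by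
    ext k
    rw [Pi.add_apply, Pi.smul_apply, map_add, map_nsmul]
    push_cast [nsmul_eq_mul, smul_eq_mul]
    rfl
  dsimp only
  rw [hlin]
  exact pow_mem_powerSpan ψ (by omega) (by omega) (n + r • m)

/-- **Filtration property**: `Ψ^{[i]} ⋅ Ψ^{[j]} ⊆ Ψ^{[i+j]}` with respect to the
coordinatewise product on `ℝ^t`. -/
theorem powerSpan_mul_subset (D t : ℕ) (ψ : Fin t → ((Fin D → ℤ) →+ ℤ)) (i j : ℕ)
    (u v : Fin t → ℝ) (hu : u ∈ powerSpan D t ψ i) (hv : v ∈ powerSpan D t ψ j) :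
    u * v ∈ powerSpan D t ψ (i + j) := by
  have hle : powerSpan D t ψ i * powerSpan D t ψ j ≤ powerSpan D t ψ (i + j) := by
    rw [powerSpan, powerSpan, Submodule.span_mul_span, Submodule.span_le]
    rintro _ ⟨_, ⟨a, ha, hai, n, rfl⟩, _, ⟨b, -, hbj, m, rfl⟩, rfl⟩
    exact pow_mul_pow_mem_powerSpan ψ ha hai hbj n m
  exact hle (Submodule.mul_mem_mul hu hv)
end

section
/- Let $V$ be a finite nonempty set, $f : V \to [0,1]$, let $\mathcal{B}$ be a partition of $V$, let $E \subseteq V$, and let $\delta > 0$. Suppose $|\langle f - \mathbb{E}(f|\mathcal{B}), 1_E \rangle| \geq \delta$, where $\langle g, h\rangle = \mathbb{E}_{v \in V} g(v) h(v)$. Let $\mathcal{B}'$ be the common refinement of $\mathcal{B}$ with the partition $\{E, V \setminus E\}$. Then $\mathcal{E}(\mathcal{B}') - \mathcal{E}(\mathcal{B}) \geq \delta^2$, where $\mathcal{E}(\mathcal{P}) = \mathbb{E}_{v\in V}|\mathbb{E}(f|\mathcal{P})(v)|^2$ is the energy. -/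
/-!
Write `g = 𝔼(f|𝓑)` and `g' = 𝔼(f|𝓑')`. The residual `f - 𝔼(f|𝓟)` is orthogonal to every function
constant on the cells of `𝓟`; since `g` and `1_E` are constant on the cells of `𝓑'`, this gives
`⟨f - g, 1_E⟩ = ⟨g' - g, 1_E⟩` and `g' - g ⟂ g`. Cauchy–Schwarz bounds the first by `‖g' - g‖ ‖1_E‖`,
and Pythagoras identifies `‖g' - g‖²` with the energy increment `‖g'‖² - ‖g‖²`.
-/

open Finset

variable {V : Type*} [Fintype V]

/-- The conditional expectation of `f` with respect to the partition of `V` induced by the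
labelling map `π : V → γ`: on each cell it equals the average of `f` over that cell. -/
noncomputable def condExp {γ : Type*} [DecidableEq γ] (f : V → ℝ) (π : V → γ) (v : V) : ℝ :=
  (∑ w ∈ univ.filter (fun w => π w = π v), f w) /
    ((univ.filter (fun w => π w = π v)).card : ℝ)

/-- The energy `𝔼_{v ∈ V} |𝔼(f|π)(v)|²` of a partition (given by a labelling `π`). -/
noncomputable def energy {γ : Type*} [DecidableEq γ] (f : V → ℝ) (π : V → γ) : ℝ :=
  (Fintype.card V : ℝ)⁻¹ * ∑ v, (condExp f π v) ^ 2

open scoped RealInnerProductSpace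

section InnerProductSpace

variable {F : Type*} [NormedAddCommGroup F] [InnerProductSpace ℝ F] {x y y' e : F}

theorem norm_sq_sub_norm_sq_eq_of_inner_eq_zero (hy : ⟪x - y, y⟫ = 0) (hy' : ⟪x - y', y⟫ = 0) :
    ‖y'‖ ^ 2 - ‖y‖ ^ 2 = ‖y' - y‖ ^ 2 := by
  have hperp : ⟪y' - y, y⟫ = 0 := by
    rw [show y' - y = (x - y) - (x - y') by abel, inner_sub_left, hy, hy', sub_zero]
  have pythagoras := norm_add_sq_eq_norm_sq_add_norm_sq_real hperp
  rw [sub_add_cancel] at pythagoras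
  rw [sq, sq, sq, pythagoras, add_sub_cancel_right]

theorem sq_inner_sub_le_of_inner_eq_zero (he : ⟪x - y', e⟫ = 0) :
    ⟪x - y, e⟫ ^ 2 ≤ ‖y' - y‖ ^ 2 * ‖e‖ ^ 2 := by
  have hshift : ⟪x - y, e⟫ = ⟪y' - y, e⟫ := by
    rw [show x - y = (x - y') + (y' - y) by abel, inner_add_left, he, zero_add]
  rw [hshift, ← mul_pow, ← sq_abs]
  gcongr
  exact abs_real_inner_le_norm _ _

end InnerProductSpace

theorem EuclideanSpace.inner_toLp_toLp_real (g h : V → ℝ) :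
    ⟪WithLp.toLp 2 g, WithLp.toLp 2 h⟫ = ∑ v, g v * h v := by
  simp [EuclideanSpace.inner_toLp_toLp, dotProduct, mul_comm]

section condExp

variable {γ γ' : Type*} [DecidableEq γ] [DecidableEq γ'] (f : V → ℝ) {π : V → γ} {π' : V → γ'}

theorem condExp_eq_of_eq {v w : V} (h : π v = π w) : condExp f π v = condExp f π w := by
  simp only [condExp, h]

theorem sum_filter_condExp (π : V → γ) (b : γ) :
    ∑ w ∈ univ.filter (π · = b), condExp f π w = ∑ w ∈ univ.filter (π · = b), f w := by
  rcases (univ.filter (π · = b)).eq_empty_or_nonempty with hempty | hne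
  · simp only [hempty, sum_empty]
  rw [sum_congr rfl fun w hw => by rw [condExp, (mem_filter.1 hw).2], sum_const, nsmul_eq_mul,
    mul_div_cancel₀ _ (by exact_mod_cast hne.card_pos.ne')]

theorem sum_sub_condExp_mul_eq_zero {g : V → ℝ} (hg : ∀ v w, π v = π w → g v = g w) :
    ∑ v, (f v - condExp f π v) * g v = 0 := by
  rw [← sum_fiberwise_of_maps_to (g := π) fun v _ => mem_image_of_mem π (mem_univ v)]
  refine sum_eq_zero fun b hb => ?_
  obtain ⟨v₀, -, rfl⟩ := mem_image.1 hb
  rw [sum_congr rfl fun w hw => by rw [hg w v₀ (mem_filter.1 hw).2], ← sum_mul,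
    sum_sub_distrib, sum_filter_condExp, sub_self, zero_mul]

theorem inner_toLp_sub_condExp_eq_zero {g : V → ℝ} (hg : ∀ v w, π v = π w → g v = g w) :
    ⟪WithLp.toLp 2 f - WithLp.toLp 2 (condExp f π), WithLp.toLp 2 g⟫ = 0 := by
  rw [← WithLp.toLp_sub, EuclideanSpace.inner_toLp_toLp_real]
  exact sum_sub_condExp_mul_eq_zero f hg

theorem energy_eq_norm_sq (π : V → γ) :
    energy f π = (Fintype.card V : ℝ)⁻¹ * ‖WithLp.toLp 2 (condExp f π)‖ ^ 2 := by
  rw [energy, EuclideanSpace.real_norm_sq_eq]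

theorem energy_sub_energy_eq (hπ : ∀ v w, π' v = π' w → π v = π w) :
    energy f π' - energy f π = (Fintype.card V : ℝ)⁻¹ *
      ‖WithLp.toLp 2 (condExp f π') - WithLp.toLp 2 (condExp f π)‖ ^ 2 := by
  rw [energy_eq_norm_sq, energy_eq_norm_sq, ← mul_sub, norm_sq_sub_norm_sq_eq_of_inner_eq_zero
    (inner_toLp_sub_condExp_eq_zero f fun _ _ => condExp_eq_of_eq f)
    (inner_toLp_sub_condExp_eq_zero f fun v w h => condExp_eq_of_eq f (hπ v w h))]

theorem energy_le_energy_of_refines (hπ : ∀ v w, π' v = π' w → π v = π w) :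
    energy f π ≤ energy f π' :=
  sub_nonneg.1 (by rw [energy_sub_energy_eq f hπ]; positivity)

theorem sq_average_sub_condExp_mul_le (hπ : ∀ v w, π' v = π' w → π v = π w) {g : V → ℝ}
    (hg : ∀ v w, π' v = π' w → g v = g w) :
    ((Fintype.card V : ℝ)⁻¹ * ∑ v, (f v - condExp f π v) * g v) ^ 2 ≤
      (energy f π' - energy f π) * ((Fintype.card V : ℝ)⁻¹ * ∑ v, g v ^ 2) := by
  have hcs := sq_inner_sub_le_of_inner_eq_zero (y := WithLp.toLp 2 (condExp f π))
    (inner_toLp_sub_condExp_eq_zero f hg)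
  rw [← WithLp.toLp_sub, EuclideanSpace.inner_toLp_toLp_real,
    EuclideanSpace.real_norm_sq_eq (WithLp.toLp 2 g)] at hcs
  rw [energy_sub_energy_eq f hπ, mul_pow]
  calc _ ≤ (Fintype.card V : ℝ)⁻¹ ^ 2 *
        (‖WithLp.toLp 2 (condExp f π') - WithLp.toLp 2 (condExp f π)‖ ^ 2 * ∑ v, g v ^ 2) := by
        gcongr; exact hcs
    _ = _ := by ring

end condExp

theorem energy_increment_general {γ : Type*} [DecidableEq γ]
    (f : V → ℝ)
    (π : V → γ) (E : Set V) [DecidablePred (· ∈ E)] (δ : ℝ) (hδ : 0 < δ)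
    (hcorr : δ ≤ |(Fintype.card V : ℝ)⁻¹ *
      ∑ v, (f v - condExp f π v) * (if v ∈ E then (1 : ℝ) else 0)|) :
    δ ^ 2 ≤ energy f (fun v => (π v, if v ∈ E then true else false)) - energy f π := by
  set π' : V → γ × Bool := fun v => (π v, if v ∈ E then true else false)
  set e : V → ℝ := fun v => if v ∈ E then 1 else 0
  have hrefine : ∀ v w, π' v = π' w → π v = π w := fun v w h => congrArg Prod.fst h
  have he : ∀ v w, π' v = π' w → e v = e w := fun v w h => by
    simp only [e, show v ∈ E ↔ w ∈ E by simpa [π'] using congrArg Prod.snd h]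
  have he_sq : (Fintype.card V : ℝ)⁻¹ * ∑ v, e v ^ 2 ≤ 1 := by
    refine inv_mul_le_one_of_le₀ ?_ (Nat.cast_nonneg _)
    calc ∑ v, e v ^ 2 ≤ ∑ _v : V, (1 : ℝ) := sum_le_sum fun v _ => by
          simp only [e]; split_ifs <;> norm_num
      _ = Fintype.card V := by simp
  calc δ ^ 2 ≤ |(Fintype.card V : ℝ)⁻¹ * ∑ v, (f v - condExp f π v) * e v| ^ 2 :=
        pow_le_pow_left₀ hδ.le hcorr 2
    _ = ((Fintype.card V : ℝ)⁻¹ * ∑ v, (f v - condExp f π v) * e v) ^ 2 := sq_abs _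
    _ ≤ (energy f π' - energy f π) * ((Fintype.card V : ℝ)⁻¹ * ∑ v, e v ^ 2) :=
        sq_average_sub_condExp_mul_le f hrefine he
    _ ≤ energy f π' - energy f π :=
        mul_le_of_le_one_right (sub_nonneg.2 (energy_le_energy_of_refines f hrefine)) he_sq

/-- **Energy increment.** If `|⟨f - 𝔼(f|π), 1_E⟩| ≥ δ`, then the common refinement of `π`
with `{E, V∖E}` has energy at least `δ²` more than `π`. -/
theorem energy_increment [Nonempty V] {γ : Type*} [DecidableEq γ]
    (f : V → ℝ) (hf : ∀ v, f v ∈ Set.Icc (0 : ℝ) 1)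
    (π : V → γ) (E : Set V) [DecidablePred (· ∈ E)] (δ : ℝ) (hδ : 0 < δ)
    (hcorr : δ ≤ |(Fintype.card V : ℝ)⁻¹ *
      ∑ v, (f v - condExp f π v) * (if v ∈ E then (1 : ℝ) else 0)|) :
    δ ^ 2 ≤ energy f (fun v => (π v, if v ∈ E then true else false)) - energy f π :=
  energy_increment_general f π E δ hδ hcorr
end

section
/- Let $G$ be a finite abelian group and let $F : G \to \mathbb{R}$. Then $\mathbb{E}_{x,y,z \in G} F(x) F(y) F(z) F(x - 3y + 3z) = \sum_{\xi \in \hat{G}} |\hat{F}(\xi)|^2 |\hat{F}(3\xi)|^2 \geq \left(\mathbb{E}_{x \in G} F(x)\right)^4$, where $\hat{F}(\xi) = \mathbb{E}_{x \in G} F(x) \overline{\xi(x)}$ and $\hat{G}$ is the character group of $G$, with $3\xi$ denoting the character $x \mapsto \xi(x)^3$. -/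
/-!
Expanding `|F̂(ξ)|² |F̂(ξᵏ)|²` gives a fourfold sum of `F(x)F(y)F(z)F(w) ξ(x - ky + kz - w)`;
summing over `ξ`, orthogonality of characters keeps only `w = x - ky + kz`. Every summand on
the Fourier side is nonnegative, and the trivial character alone contributes `(𝔼 F)⁴`.
-/

open Finset ComplexConjugate

/-- The Fourier transform `F̂(ξ) = 𝔼_{x ∈ G} F(x) conj(ξ(x))` of a real function on a finite
abelian group. -/
noncomputable def fourierCoeff' {G : Type*} [AddCommGroup G] [Fintype G]
    (F : G → ℝ) (ξ : AddChar G ℂ) : ℂ :=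
  (Fintype.card G : ℂ)⁻¹ * ∑ x, (F x : ℂ) * conj (ξ x)

section
variable {G : Type*} [AddCommGroup G] [Fintype G]

lemma sum_addChar_mul_apply_sub [Fintype (AddChar G ℂ)] (g : G → ℂ) (t : G) :
    ∑ ψ : AddChar G ℂ, ∑ w, g w * ψ (t - w) = Fintype.card G * g t := by
  classical
  obtain rfl := Subsingleton.elim ‹Fintype (AddChar G ℂ)› (AddChar.instFintype G ℂ)
  rw [sum_comm]
  simp_rw [← mul_sum, AddChar.sum_apply_eq_ite, sub_eq_zero, mul_ite, mul_zero,
    sum_ite_eq, mem_univ, if_true, mul_comm]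

lemma fourierCoeff'_one (F : G → ℝ) :
    fourierCoeff' F 1 = (((Fintype.card G : ℝ)⁻¹ * ∑ x, F x : ℝ) : ℂ) := by
  simp [fourierCoeff']

lemma conj_fourierCoeff' (F : G → ℝ) (ξ : AddChar G ℂ) :
    conj (fourierCoeff' F ξ) = (Fintype.card G : ℂ)⁻¹ * ∑ x, (F x : ℂ) * ξ x := by
  simp [fourierCoeff', map_sum]

lemma norm_sq_fourierCoeff'_mul_norm_sq_fourierCoeff'_pow (F : G → ℝ) (ξ : AddChar G ℂ)
    (k : ℕ) :
    ((‖fourierCoeff' F ξ‖ ^ 2 * ‖fourierCoeff' F (ξ ^ k)‖ ^ 2 : ℝ) : ℂ) =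
      ((Fintype.card G : ℂ) ^ 4)⁻¹ * ∑ x, ∑ y, ∑ z,
        (F x : ℂ) * F y * F z * ∑ w, (F w : ℂ) * ξ (x - k • y + k • z - w) := by
  have hconj (x : G) : conj (ξ x) = ξ (-x) := by
    rw [AddChar.map_neg_eq_inv, AddChar.inv_apply_eq_conj]
  have hpow (x : G) : (ξ ^ k) x = ξ (k • x) := by
    rw [AddChar.pow_apply, AddChar.map_nsmul_eq_pow]
  have hchar (x y z w : G) :
      ξ x * conj ((ξ ^ k) y) * (ξ ^ k) z * conj (ξ w) = ξ (x - k • y + k • z - w) := by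
    simp only [hconj, hpow, ← AddChar.map_add_eq_mul]
    congr 1
    abel
  calc ((‖fourierCoeff' F ξ‖ ^ 2 * ‖fourierCoeff' F (ξ ^ k)‖ ^ 2 : ℝ) : ℂ)
      = fourierCoeff' F ξ * conj (fourierCoeff' F (ξ ^ k)) * fourierCoeff' F (ξ ^ k) *
          conj (fourierCoeff' F ξ) := by
        push_cast
        rw [← Complex.conj_mul', ← Complex.conj_mul']
        ring
    _ = _ := by
        rw [conj_fourierCoeff', conj_fourierCoeff', fourierCoeff', fourierCoeff']
        simp only [sum_mul, mul_sum]
        refine sum_congr rfl fun x _ ↦ sum_congr rfl fun y _ ↦ sum_congr rfl fun z _ ↦ ?_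
        refine sum_congr rfl fun w _ ↦ ?_
        rw [← hchar]
        ring

variable [Fintype (AddChar G ℂ)]

lemma sum_norm_sq_fourierCoeff'_mul_norm_sq_fourierCoeff'_pow (F : G → ℝ) (k : ℕ) :
    ∑ ξ : AddChar G ℂ, ‖fourierCoeff' F ξ‖ ^ 2 * ‖fourierCoeff' F (ξ ^ k)‖ ^ 2 =
      ((Fintype.card G : ℝ) ^ 3)⁻¹ *
        ∑ x, ∑ y, ∑ z, F x * F y * F z * F (x - k • y + k • z) := by
  have hn : (Fintype.card G : ℂ) ≠ 0 := Nat.cast_ne_zero.2 Fintype.card_ne_zero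
  apply Complex.ofReal_injective
  calc ((∑ ξ : AddChar G ℂ, ‖fourierCoeff' F ξ‖ ^ 2 * ‖fourierCoeff' F (ξ ^ k)‖ ^ 2 : ℝ) : ℂ)
      = ((Fintype.card G : ℂ) ^ 4)⁻¹ * ∑ x, ∑ y, ∑ z, (F x : ℂ) * F y * F z *
          ∑ ξ : AddChar G ℂ, ∑ w, (F w : ℂ) * ξ (x - k • y + k • z - w) := by
        simp only [Complex.ofReal_sum, norm_sq_fourierCoeff'_mul_norm_sq_fourierCoeff'_pow,
          ← mul_sum]
        congr 1
        rw [sum_comm]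
        refine sum_congr rfl fun x _ ↦ ?_
        rw [sum_comm]
        refine sum_congr rfl fun y _ ↦ ?_
        rw [sum_comm]
        simp only [mul_sum]
    _ = _ := by
        simp only [sum_addChar_mul_apply_sub, mul_sum]
        push_cast
        refine sum_congr rfl fun x _ ↦ sum_congr rfl fun y _ ↦ sum_congr rfl fun z _ ↦ ?_
        field_simp

lemma mean_pow_four_le_sum_norm_sq_fourierCoeff'_mul_norm_sq_fourierCoeff'_pow
    (F : G → ℝ) (k : ℕ) :
    ((Fintype.card G : ℝ)⁻¹ * ∑ x, F x) ^ 4 ≤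
      ∑ ξ : AddChar G ℂ, ‖fourierCoeff' F ξ‖ ^ 2 * ‖fourierCoeff' F (ξ ^ k)‖ ^ 2 := by
  have htrivial : ‖fourierCoeff' F 1‖ ^ 2 * ‖fourierCoeff' F (1 ^ k)‖ ^ 2 =
      ((Fintype.card G : ℝ)⁻¹ * ∑ x, F x) ^ 4 := by
    rw [one_pow, fourierCoeff'_one, Complex.norm_real, Real.norm_eq_abs, ← pow_add]
    exact Even.pow_abs ⟨2, rfl⟩ _
  rw [← htrivial]
  exact single_le_sum
    (f := fun ξ : AddChar G ℂ ↦ ‖fourierCoeff' F ξ‖ ^ 2 * ‖fourierCoeff' F (ξ ^ k)‖ ^ 2)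
    (fun ξ _ ↦ by positivity) (mem_univ 1)

end

/-- **Vertical Fourier positivity.** For a finite abelian group `G` and `F : G → ℝ`,
`𝔼_{x,y,z} F(x)F(y)F(z)F(x - 3y + 3z) = ∑_ξ |F̂(ξ)|²|F̂(3ξ)|² ≥ (𝔼 F)⁴`. -/
theorem vertical_fourier_positivity {G : Type*} [AddCommGroup G] [Fintype G]
    [Fintype (AddChar G ℂ)] (F : G → ℝ) :
    (((Fintype.card G : ℝ) ^ 3)⁻¹ *
        ∑ x : G, ∑ y : G, ∑ z : G, F x * F y * F z * F (x - 3 • y + 3 • z) =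
      ∑ ξ : AddChar G ℂ, ‖fourierCoeff' F ξ‖ ^ 2 * ‖fourierCoeff' F (ξ ^ 3)‖ ^ 2) ∧
    ((Fintype.card G : ℝ)⁻¹ * ∑ x : G, F x) ^ 4 ≤
      ((Fintype.card G : ℝ) ^ 3)⁻¹ *
        ∑ x : G, ∑ y : G, ∑ z : G, F x * F y * F z * F (x - 3 • y + 3 • z) := by
  rw [← sum_norm_sq_fourierCoeff'_mul_norm_sq_fourierCoeff'_pow]
  exact ⟨rfl, mean_pow_four_le_sum_norm_sq_fourierCoeff'_mul_norm_sq_fourierCoeff'_pow F 3⟩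
end
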